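/- Fix β > 0, δ ∈ (0, 1], and σ_w ≥ 0, and define Ψ(s) = σ_w² + (1/δ)·E[(η(X + √s·Z; β·√s) − X)²] for s ≥ 0. Then Ψ is a concave function of s on [0, ∞); that is, for all s₁, s₂ ≥ 0 and α ∈ [0,1], Ψ(αs₁ + (1−α)s₂) ≥ α·Ψ(s₁) + (1−α)·Ψ(s₂). -/

import Mathlib

open MeasureTheory

noncomputable def gaussPDF (z : ℝ) : ℝ := Real.exp (-z ^ 2 / 2) / Real.sqrt (2 * Real.pi)

noncomputable def softThr (x τ : ℝ) : ℝ := Real.sign x * max (|x| - τ) 0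

noncomputable def stRisk (G : Measure ℝ) (τ : ℝ) : ℝ :=
  ∫ m, (∫ z, (softThr (m + z) τ - m) ^ 2 * gaussPDF z) ∂G

/-!
Fix a signal value `x` and let `q(s) = E[(η(x + √s Z; β√s) - x)²]`. For each `Z` off the
two kinks of `η`, the error is locally `√s (Z - β)`, `√s (Z + β)` or `-x`, so its square is
locally affine in `s`, with slope `(Z - β)²`, `(Z + β)²` or `0`. Differentiating under the
integral and shifting `Z` by `±β` gives `q'(s) = ∫ w² φ(w ± β) dw`, with the `+` branch taken
exactly when `√s w > -x`. As `s` grows, a point `w` can only switch to the branch of smaller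
Gaussian weight (`φ(w + β) ≤ φ(w - β)` for `w ≥ 0`, the reverse for `w < 0`), so `q'` is
antitone and `q` is concave. Averaging over `X ∼ G` preserves concavity.
-/

open Set Filter Topology

lemma softThr_eq_max_add_min {τ : ℝ} (hτ : 0 ≤ τ) (y : ℝ) :
    softThr y τ = max (y - τ) 0 + min (y + τ) 0 := by
  rcases lt_trichotomy y 0 with hy | rfl | hy
  · rw [softThr, Real.sign_of_neg hy, abs_of_neg hy, max_eq_right (by linarith : y - τ ≤ 0)]
    rcases le_total (y + τ) 0 with h | h
    · rw [max_eq_left (by linarith), min_eq_left h]; ring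
    · rw [max_eq_right (by linarith), min_eq_right h]; ring
  · simp [softThr, hτ]
  · rw [softThr, Real.sign_of_pos hy, abs_of_pos hy, min_eq_right (by linarith : 0 ≤ y + τ)]
    ring

lemma abs_softThr_sub_softThr_le {τ τ' : ℝ} (hτ : 0 ≤ τ) (hτ' : 0 ≤ τ') (y y' : ℝ) :
    |softThr y τ - softThr y' τ'| ≤ |(y - τ) - (y' - τ')| + |(y + τ) - (y' + τ')| := by
  rw [softThr_eq_max_add_min hτ, softThr_eq_max_add_min hτ', add_sub_add_comm]
  refine (abs_add_le _ _).trans (add_le_add (abs_max_sub_max_le_abs _ _ _) ?_)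
  simpa using abs_min_sub_min_le_max (y + τ) 0 (y' + τ') 0

lemma gaussPDF_nonneg (z : ℝ) : 0 ≤ gaussPDF z := by
  unfold gaussPDF; positivity

@[fun_prop]
lemma continuous_gaussPDF : Continuous gaussPDF := by
  unfold gaussPDF; fun_prop

lemma gaussPDF_le_gaussPDF_of_sq_le {a b : ℝ} (h : a ^ 2 ≤ b ^ 2) : gaussPDF b ≤ gaussPDF a := by
  unfold gaussPDF; gcongr

lemma integrable_gaussPDF : Integrable gaussPDF := by
  refine ((integrable_exp_neg_mul_sq (b := 1 / 2) (by norm_num)).div_const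
    (Real.sqrt (2 * Real.pi))).congr (ae_of_all _ fun z => ?_)
  simp only [gaussPDF]; ring_nf

lemma integrable_sq_mul_gaussPDF : Integrable fun z => z ^ 2 * gaussPDF z := by
  refine ((integrable_rpow_mul_exp_neg_mul_sq (b := 1 / 2) (s := 2) (by norm_num)
    (by norm_num)).div_const (Real.sqrt (2 * Real.pi))).congr (ae_of_all _ fun z => ?_)
  simp only [gaussPDF, Real.rpow_two]; ring_nf

lemma integrable_of_abs_le_quadratic_mul_gaussPDF {f : ℝ → ℝ} (hf : AEStronglyMeasurable f)
    (a b : ℝ) (hbound : ∀ z, |f z| ≤ (a + b * z ^ 2) * gaussPDF z) : Integrable f := by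
  refine ((integrable_gaussPDF.const_mul a).add (integrable_sq_mul_gaussPDF.const_mul b)).mono'
    hf (ae_of_all _ fun z => ?_)
  simpa only [Real.norm_eq_abs, Pi.add_apply, add_mul, mul_assoc] using hbound z

lemma integrable_sq_sub_mul_gaussPDF (c : ℝ) : Integrable fun z => (z - c) ^ 2 * gaussPDF z :=
  integrable_of_abs_le_quadratic_mul_gaussPDF (by fun_prop) (2 * c ^ 2) 2 fun z => by
    rw [abs_of_nonneg (mul_nonneg (sq_nonneg _) (gaussPDF_nonneg z))]
    exact mul_le_mul_of_nonneg_right (by nlinarith [sq_nonneg (z + c)]) (gaussPDF_nonneg z)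

lemma integrable_mul_sq_add_sq_mul_gaussPDF (c β : ℝ) :
    Integrable fun z => c * (z ^ 2 + β ^ 2) * gaussPDF z :=
  ((integrable_sq_mul_gaussPDF.const_mul c).add (integrable_gaussPDF.const_mul (c * β ^ 2))).congr
    (ae_of_all _ fun z => by simp only [Pi.add_apply]; ring)

lemma concaveOn_integral {α E : Type*} [MeasurableSpace α] {μ : Measure α} [AddCommGroup E]
    [Module ℝ E] {S : Set E} {f : α → E → ℝ} (hS : Convex ℝ S)
    (hf : ∀ᵐ a ∂μ, ConcaveOn ℝ S (f a)) (hint : ∀ t ∈ S, Integrable (fun a => f a t) μ) :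
    ConcaveOn ℝ S fun t => ∫ a, f a t ∂μ := by
  refine ⟨hS, fun t ht t' ht' p q hp hq hpq => ?_⟩
  simp only [smul_eq_mul]
  rw [← integral_const_mul, ← integral_const_mul,
    ← integral_add ((hint t ht).const_mul p) ((hint t' ht').const_mul q)]
  refine integral_mono_ae (((hint t ht).const_mul p).add ((hint t' ht').const_mul q))
    (hint _ (hS ht ht' hp hq hpq)) (hf.mono fun a ha => ?_)
  simpa only [smul_eq_mul] using ha.2 ht ht' hp hq hpq

noncomputable def thrError (β x s z : ℝ) : ℝ :=
  softThr (x + Real.sqrt s * z) (β * Real.sqrt s) - x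

noncomputable def scalarRisk (β x s : ℝ) : ℝ := ∫ z, thrError β x s z ^ 2 * gaussPDF z

-- The second condition is non-strict so that, after the shifts `z = w ± β`, the two branches
-- become complementary, as in `scalarRiskDeriv`.
noncomputable def thrErrorSqSlope (β x s z : ℝ) : ℝ :=
  (if -x < Real.sqrt s * (z - β) then (z - β) ^ 2 else 0)
    + (if Real.sqrt s * (z + β) ≤ -x then (z + β) ^ 2 else 0)

noncomputable def scalarRiskDeriv (β x s : ℝ) : ℝ :=
  ∫ w, w ^ 2 * if -x < Real.sqrt s * w then gaussPDF (w + β) else gaussPDF (w - β)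

section ScalarRisk

variable {β : ℝ} (x : ℝ)

lemma thrError_eq (hβ : 0 ≤ β) (s z : ℝ) :
    thrError β x s z
      = max (x + Real.sqrt s * (z - β)) 0 + min (x + Real.sqrt s * (z + β)) 0 - x := by
  rw [thrError, softThr_eq_max_add_min (mul_nonneg hβ (Real.sqrt_nonneg s))]
  ring_nf

lemma thrError_zero (z : ℝ) : thrError β x 0 z = 0 := by
  rw [thrError, Real.sqrt_zero, zero_mul, mul_zero, add_zero, softThr_eq_max_add_min le_rfl,
    sub_zero, add_zero, max_add_min, add_zero, sub_self]

lemma continuous_thrError (hβ : 0 ≤ β) (s : ℝ) :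
    Continuous fun p : ℝ × ℝ => thrError β p.1 s p.2 := by
  simp only [thrError_eq _ hβ]
  fun_prop

lemma abs_thrError_sub_le (hβ : 0 ≤ β) (s s' z : ℝ) :
    |thrError β x s z - thrError β x s' z|
      ≤ (|z - β| + |z + β|) * |Real.sqrt s - Real.sqrt s'| := by
  have h := abs_softThr_sub_softThr_le (mul_nonneg hβ (Real.sqrt_nonneg s))
    (mul_nonneg hβ (Real.sqrt_nonneg s')) (x + Real.sqrt s * z) (x + Real.sqrt s' * z)
  rw [thrError, thrError, sub_sub_sub_cancel_right]
  refine h.trans (le_of_eq ?_)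
  rw [add_mul, ← abs_mul, ← abs_mul]
  ring_nf

lemma abs_thrError_sq_sub_le (hβ : 0 ≤ β) {s s' : ℝ} (hs : 0 ≤ s) (hs' : 0 ≤ s') (z : ℝ) :
    |thrError β x s z ^ 2 - thrError β x s' z ^ 2| ≤ 4 * (z ^ 2 + β ^ 2) * |s - s'| := by
  set c := |z - β| + |z + β|
  have hc : c ^ 2 ≤ 4 * (z ^ 2 + β ^ 2) := by
    nlinarith [sq_abs (z - β), sq_abs (z + β), sq_nonneg (|z - β| - |z + β|)]
  have habs : ∀ t, |thrError β x t z| ≤ c * Real.sqrt t := fun t => by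
    simpa [thrError_zero, abs_of_nonneg (Real.sqrt_nonneg t)] using
      abs_thrError_sub_le x hβ t 0 z
  have hroots : |Real.sqrt s - Real.sqrt s'| * (Real.sqrt s + Real.sqrt s') = |s - s'| := by
    rw [← abs_of_nonneg (by positivity : 0 ≤ Real.sqrt s + Real.sqrt s'), ← abs_mul,
      mul_comm, ← sq_sub_sq, Real.sq_sqrt hs, Real.sq_sqrt hs']
  calc |thrError β x s z ^ 2 - thrError β x s' z ^ 2|
      = |thrError β x s z - thrError β x s' z| * |thrError β x s z + thrError β x s' z| := by
        rw [sq_sub_sq, abs_mul, mul_comm]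
    _ ≤ (c * |Real.sqrt s - Real.sqrt s'|) * (c * Real.sqrt s + c * Real.sqrt s') := by
        gcongr
        · exact abs_thrError_sub_le x hβ s s' z
        · exact (abs_add_le _ _).trans (add_le_add (habs s) (habs s'))
    _ = c ^ 2 * |s - s'| := by rw [← hroots]; ring
    _ ≤ 4 * (z ^ 2 + β ^ 2) * |s - s'| := by gcongr

lemma thrError_sq_le (hβ : 0 ≤ β) {s : ℝ} (hs : 0 ≤ s) (z : ℝ) :
    thrError β x s z ^ 2 ≤ 4 * (z ^ 2 + β ^ 2) * s := by
  simpa [thrError_zero, abs_of_nonneg hs] using abs_thrError_sq_sub_le x hβ hs le_rfl z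

lemma integrable_thrError_sq_mul_gaussPDF (hβ : 0 ≤ β) {s : ℝ} (hs : 0 ≤ s) :
    Integrable fun z => thrError β x s z ^ 2 * gaussPDF z := by
  refine integrable_of_abs_le_quadratic_mul_gaussPDF ?_ (4 * β ^ 2 * s) (4 * s) fun z => ?_
  · exact ((((continuous_thrError hβ s).comp (Continuous.prodMk_right x)).pow 2).mul
      continuous_gaussPDF).aestronglyMeasurable
  · rw [abs_mul, abs_of_nonneg (gaussPDF_nonneg z), abs_of_nonneg (sq_nonneg _)]
    exact mul_le_mul_of_nonneg_right ((thrError_sq_le x hβ hs z).trans_eq (by ring))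
      (gaussPDF_nonneg z)

lemma abs_scalarRisk_sub_le (hβ : 0 ≤ β) {s s' : ℝ} (hs : 0 ≤ s) (hs' : 0 ≤ s') :
    |scalarRisk β x s - scalarRisk β x s'|
      ≤ (∫ z, 4 * (z ^ 2 + β ^ 2) * gaussPDF z) * |s - s'| := by
  rw [scalarRisk, scalarRisk, ← integral_sub (integrable_thrError_sq_mul_gaussPDF x hβ hs)
    (integrable_thrError_sq_mul_gaussPDF x hβ hs'), ← integral_mul_const]
  refine (abs_integral_le_integral_abs).trans (integral_mono ?_ ?_ fun z => ?_)
  · exact ((integrable_thrError_sq_mul_gaussPDF x hβ hs).sub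
      (integrable_thrError_sq_mul_gaussPDF x hβ hs')).abs
  · exact (integrable_mul_sq_add_sq_mul_gaussPDF 4 β).mul_const _
  · rw [← sub_mul, abs_mul, abs_of_nonneg (gaussPDF_nonneg z), mul_right_comm]
    exact mul_le_mul_of_nonneg_right (abs_thrError_sq_sub_le x hβ hs hs' z) (gaussPDF_nonneg z)

lemma continuousOn_scalarRisk (hβ : 0 ≤ β) : ContinuousOn (scalarRisk β x) (Ici 0) := by
  set C := ∫ z, 4 * (z ^ 2 + β ^ 2) * gaussPDF z
  have hlip : LipschitzOnWith C.toNNReal (scalarRisk β x) (Ici 0) :=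
    LipschitzOnWith.of_dist_le_mul fun s hs s' hs' => by
      rw [Real.dist_eq, Real.dist_eq]
      exact (abs_scalarRisk_sub_le x hβ hs hs').trans (by gcongr; exact C.le_coe_toNNReal)
  exact hlip.continuousOn

lemma abs_scalarRisk_le (hβ : 0 ≤ β) {s : ℝ} (hs : 0 ≤ s) :
    |scalarRisk β x s| ≤ (∫ z, 4 * (z ^ 2 + β ^ 2) * gaussPDF z) * s := by
  simpa [scalarRisk, thrError_zero, abs_of_nonneg hs] using abs_scalarRisk_sub_le x hβ hs le_rfl

lemma thrError_of_lt (hβ : 0 ≤ β) {s z : ℝ} (h : -x < Real.sqrt s * (z - β)) :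
    thrError β x s z = Real.sqrt s * (z - β) := by
  have : Real.sqrt s * (z - β) ≤ Real.sqrt s * (z + β) := by gcongr; linarith
  rw [thrError_eq x hβ, max_eq_left (by linarith), min_eq_right (by linarith)]
  ring

lemma thrError_of_lt_neg (hβ : 0 ≤ β) {s z : ℝ} (h : Real.sqrt s * (z + β) < -x) :
    thrError β x s z = Real.sqrt s * (z + β) := by
  have : Real.sqrt s * (z - β) ≤ Real.sqrt s * (z + β) := by gcongr; linarith
  rw [thrError_eq x hβ, max_eq_right (by linarith), min_eq_left (by linarith)]
  ring

lemma thrError_of_le_of_le (hβ : 0 ≤ β) {s z : ℝ} (h₁ : Real.sqrt s * (z - β) ≤ -x)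
    (h₂ : -x ≤ Real.sqrt s * (z + β)) : thrError β x s z = -x := by
  rw [thrError_eq x hβ, max_eq_right (by linarith), min_eq_right (by linarith)]
  ring

lemma hasDerivAt_thrError_sq (hβ : 0 ≤ β) {s₀ z : ℝ} (hs₀ : 0 < s₀)
    (h₁ : Real.sqrt s₀ * (z - β) ≠ -x) (h₂ : Real.sqrt s₀ * (z + β) ≠ -x) :
    HasDerivAt (fun s => thrError β x s z ^ 2) (thrErrorSqSlope β x s₀ z) s₀ := by
  have hle : Real.sqrt s₀ * (z - β) ≤ Real.sqrt s₀ * (z + β) := by gcongr; linarith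
  have hcont : ∀ c, ContinuousAt (fun s => Real.sqrt s * c) s₀ := fun c => by fun_prop
  have hpos : ∀ᶠ s in 𝓝 s₀, 0 < s := eventually_gt_nhds hs₀
  rcases h₁.lt_or_gt with h₁ | h₁
  · rcases h₂.lt_or_gt with h₂ | h₂
    · have hslope : thrErrorSqSlope β x s₀ z = (z + β) ^ 2 := by
        simp [thrErrorSqSlope, h₂.le, (hle.trans h₂.le).not_gt]
      rw [hslope]
      refine (hasDerivAt_mul_const _).congr_of_eventuallyEq ?_
      filter_upwards [(hcont (z + β)).eventually_lt_const h₂, hpos] with s hs hs0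
      rw [thrError_of_lt_neg x hβ hs, mul_pow, Real.sq_sqrt hs0.le]
    · have hslope : thrErrorSqSlope β x s₀ z = 0 := by
        simp [thrErrorSqSlope, h₁.not_gt, h₂.not_ge]
      rw [hslope]
      refine (hasDerivAt_const s₀ (x ^ 2)).congr_of_eventuallyEq ?_
      filter_upwards [(hcont (z - β)).eventually_lt_const h₁,
        (hcont (z + β)).eventually_const_lt h₂] with s hs₁ hs₂
      rw [thrError_of_le_of_le x hβ hs₁.le hs₂.le, neg_sq]
  · have hslope : thrErrorSqSlope β x s₀ z = (z - β) ^ 2 := by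
      simp [thrErrorSqSlope, h₁, (h₁.trans_le hle).not_ge]
    rw [hslope]
    refine (hasDerivAt_mul_const _).congr_of_eventuallyEq ?_
    filter_upwards [(hcont (z - β)).eventually_const_lt h₁, hpos] with s hs hs0
    rw [thrError_of_lt x hβ hs, mul_pow, Real.sq_sqrt hs0.le]

lemma measurable_thrErrorSqSlope (s : ℝ) : Measurable (thrErrorSqSlope β x s) := by
  unfold thrErrorSqSlope
  refine Measurable.add ?_ ?_ <;> refine Measurable.ite ?_ (by fun_prop) measurable_const
  · exact measurableSet_lt measurable_const (by fun_prop)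
  · exact measurableSet_le (by fun_prop) measurable_const

lemma hasDerivAt_scalarRisk (hβ : 0 ≤ β) {s₀ : ℝ} (hs₀ : 0 < s₀) :
    HasDerivAt (scalarRisk β x) (∫ z, thrErrorSqSlope β x s₀ z * gaussPDF z) s₀ := by
  have hsqrt : Real.sqrt s₀ ≠ 0 := (Real.sqrt_pos.2 hs₀).ne'
  have hlip : ∀ z, LipschitzOnWith (Real.nnabs (4 * (z ^ 2 + β ^ 2) * gaussPDF z))
      (fun s => thrError β x s z ^ 2 * gaussPDF z) (Ioi 0) := fun z =>
    LipschitzOnWith.of_dist_le_mul fun s hs s' hs' => by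
      have h := mul_le_mul_of_nonneg_right
        (abs_thrError_sq_sub_le x hβ (le_of_lt hs) (le_of_lt hs') z) (gaussPDF_nonneg z)
      rw [Real.dist_eq, Real.dist_eq, Real.coe_nnabs, ← sub_mul, abs_mul (_ - _),
        abs_of_nonneg (gaussPDF_nonneg z),
        abs_of_nonneg (mul_nonneg (by positivity) (gaussPDF_nonneg z))]
      linear_combination h
  have hdiff : ∀ᵐ z, HasDerivAt (fun s => thrError β x s z ^ 2 * gaussPDF z)
      (thrErrorSqSlope β x s₀ z * gaussPDF z) s₀ := by
    filter_upwards [volume.ae_ne (β - x / Real.sqrt s₀), volume.ae_ne (-β - x / Real.sqrt s₀)]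
      with z hz₁ hz₂
    refine (hasDerivAt_thrError_sq x hβ hs₀ (fun h => hz₁ ?_) (fun h => hz₂ ?_)).mul_const _
    all_goals field_simp; linarith
  exact (hasDerivAt_integral_of_dominated_loc_of_lip (Ioi_mem_nhds hs₀)
    ((eventually_gt_nhds hs₀).mono fun s hs =>
      (integrable_thrError_sq_mul_gaussPDF x hβ (le_of_lt hs)).aestronglyMeasurable)
    (integrable_thrError_sq_mul_gaussPDF x hβ hs₀.le)
    ((measurable_thrErrorSqSlope x s₀).mul (by fun_prop)).aestronglyMeasurable
    (ae_of_all _ hlip) (integrable_mul_sq_add_sq_mul_gaussPDF 4 β) hdiff).2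

lemma integral_thrErrorSqSlope_mul_gaussPDF (s : ℝ) :
    ∫ z, thrErrorSqSlope β x s z * gaussPDF z = scalarRiskDeriv β x s := by
  set up : ℝ → ℝ := fun z =>
    (if -x < Real.sqrt s * (z - β) then (z - β) ^ 2 else 0) * gaussPDF z
  set lo : ℝ → ℝ := fun z =>
    (if Real.sqrt s * (z + β) ≤ -x then (z + β) ^ 2 else 0) * gaussPDF z
  have hup : Integrable up := ((integrable_sq_sub_mul_gaussPDF β).indicator
    (measurableSet_lt measurable_const (by fun_prop) :
      MeasurableSet {z | -x < Real.sqrt s * (z - β)})).congr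
      (ae_of_all _ fun z => by simp [up, Set.indicator_apply, ite_mul])
  have hlo : Integrable lo := ((integrable_sq_sub_mul_gaussPDF (-β)).indicator
    (measurableSet_le (by fun_prop) measurable_const :
      MeasurableSet {z | Real.sqrt s * (z + β) ≤ -x})).congr
      (ae_of_all _ fun z => by simp [lo, Set.indicator_apply, ite_mul])
  calc ∫ z, thrErrorSqSlope β x s z * gaussPDF z = (∫ z, up z) + ∫ z, lo z := by
        rw [← integral_add hup hlo]
        simp only [up, lo, thrErrorSqSlope, add_mul]
    _ = (∫ w, up (w + β)) + ∫ w, lo (w - β) := by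
        rw [integral_add_right_eq_self, integral_sub_right_eq_self]
    _ = ∫ w, (up (w + β) + lo (w - β)) :=
        (integral_add (hup.comp_add_right β) (hlo.comp_sub_right β)).symm
    _ = scalarRiskDeriv β x s := by
        refine integral_congr_ae (ae_of_all _ fun w => ?_)
        rcases lt_or_ge (-x) (Real.sqrt s * w) with h | h
        · simp [up, lo, h, not_le.2 h]
        · simp [up, lo, h, not_lt.2 h]

lemma integrable_scalarRiskDeriv_integrand (s : ℝ) :
    Integrable fun w =>
      w ^ 2 * if -x < Real.sqrt s * w then gaussPDF (w + β) else gaussPDF (w - β) := by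
  have hshift : ∀ c, Integrable fun w => w ^ 2 * gaussPDF (w + c) := fun c => by
    simpa using (integrable_sq_sub_mul_gaussPDF c).comp_add_right c
  have hminus : Integrable fun w => w ^ 2 * gaussPDF (w - β) := by
    simpa [sub_eq_add_neg] using hshift (-β)
  refine ((hshift β).add hminus).mono' ?_ (ae_of_all _ fun w => ?_)
  · exact (Measurable.mul (by fun_prop) (Measurable.ite (measurableSet_lt measurable_const
      (by fun_prop)) (by fun_prop) (by fun_prop))).aestronglyMeasurable
  · have h₁ := mul_nonneg (sq_nonneg w) (gaussPDF_nonneg (w + β))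
    have h₂ := mul_nonneg (sq_nonneg w) (gaussPDF_nonneg (w - β))
    simp only [Pi.add_apply]
    split_ifs
    · rw [Real.norm_eq_abs, abs_of_nonneg h₁]; linarith
    · rw [Real.norm_eq_abs, abs_of_nonneg h₂]; linarith

lemma antitone_scalarRiskDeriv (hβ : 0 ≤ β) : Antitone (scalarRiskDeriv β x) := by
  intro s₁ s₂ hs
  refine integral_mono (integrable_scalarRiskDeriv_integrand x s₂)
    (integrable_scalarRiskDeriv_integrand x s₁) fun w =>
      mul_le_mul_of_nonneg_left ?_ (sq_nonneg w)
  have hroot := Real.sqrt_le_sqrt hs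
  rcases le_or_gt 0 w with hw | hw
  · have hφ : gaussPDF (w + β) ≤ gaussPDF (w - β) :=
      gaussPDF_le_gaussPDF_of_sq_le (by nlinarith)
    have : Real.sqrt s₁ * w ≤ Real.sqrt s₂ * w := mul_le_mul_of_nonneg_right hroot hw
    split_ifs <;> first | exact le_rfl | exact hφ | (exfalso; linarith)
  · have hφ : gaussPDF (w - β) ≤ gaussPDF (w + β) :=
      gaussPDF_le_gaussPDF_of_sq_le (by nlinarith)
    have : Real.sqrt s₂ * w ≤ Real.sqrt s₁ * w := mul_le_mul_of_nonpos_right hroot hw.le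
    split_ifs <;> first | exact le_rfl | exact hφ | (exfalso; linarith)

lemma concaveOn_scalarRisk (hβ : 0 ≤ β) : ConcaveOn ℝ (Ici 0) (scalarRisk β x) := by
  have hderiv : ∀ s ∈ interior (Ici (0 : ℝ)),
      HasDerivAt (scalarRisk β x) (scalarRiskDeriv β x s) s := by
    rw [interior_Ici]
    intro s hs
    simpa only [integral_thrErrorSqSlope_mul_gaussPDF] using hasDerivAt_scalarRisk x hβ hs
  refine AntitoneOn.concaveOn_of_deriv (convex_Ici 0) (continuousOn_scalarRisk x hβ)
    (fun s hs => (hderiv s hs).differentiableAt.differentiableWithinAt)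
    fun s hs s' hs' hss' => ?_
  rw [(hderiv s hs).deriv, (hderiv s' hs').deriv]
  exact antitone_scalarRiskDeriv x hβ hss'

end ScalarRisk

lemma integrable_scalarRisk (G : Measure ℝ) [IsFiniteMeasure G] {β s : ℝ} (hβ : 0 ≤ β)
    (hs : 0 ≤ s) : Integrable (fun x => scalarRisk β x s) G := by
  have hmeas : StronglyMeasurable fun x => scalarRisk β x s :=
    StronglyMeasurable.integral_prod_right
      ((((continuous_thrError hβ s).pow 2).mul (by fun_prop)).stronglyMeasurable)
  exact Integrable.of_bound hmeas.aestronglyMeasurable _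
    (ae_of_all _ fun x => abs_scalarRisk_le x hβ hs)

theorem Psi_concave_general (G : Measure ℝ) [IsProbabilityMeasure G]
    (δ σw β : ℝ) (hδ : 0 < δ) (hβ : 0 < β)
    (Ψ : ℝ → ℝ)
    (hΨ : ∀ s : ℝ, Ψ s = σw ^ 2 + (1 / δ) *
      ∫ x, (∫ z, (softThr (x + Real.sqrt s * z) (β * Real.sqrt s) - x) ^ 2 * gaussPDF z) ∂G) :
    ∀ s₁ s₂ α : ℝ, 0 ≤ s₁ → 0 ≤ s₂ → 0 ≤ α → α ≤ 1 →
      α * Ψ s₁ + (1 - α) * Ψ s₂ ≤ Ψ (α * s₁ + (1 - α) * s₂) := by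
  intro s₁ s₂ α hs₁ hs₂ hα₀ hα₁
  have hΨ' : Ψ = fun s => σw ^ 2 + (1 / δ) * ∫ x, scalarRisk β x s ∂G := funext hΨ
  have hconcave : ConcaveOn ℝ (Ici 0) Ψ := by
    rw [hΨ']
    exact (concaveOn_const _ (convex_Ici 0)).add ((concaveOn_integral (convex_Ici 0)
      (ae_of_all _ fun x => concaveOn_scalarRisk x hβ.le)
      fun s hs => integrable_scalarRisk G hβ.le hs).smul (by positivity))
  simpa using hconcave.2 hs₁ hs₂ hα₀ (sub_nonneg.2 hα₁) (add_sub_cancel α 1)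

/-- `Ψ(s) = σ_w² + (1/δ)·E[(η(X + √s·Z; β√s) − X)²]` is concave on `[0, ∞)`. -/
theorem Psi_concave (G : Measure ℝ) [IsProbabilityMeasure G]
    (hX : Integrable (fun x => x ^ 2) G)
    (δ σw β : ℝ) (hδ : 0 < δ) (hδ1 : δ ≤ 1) (hσw : 0 ≤ σw) (hβ : 0 < β)
    (Ψ : ℝ → ℝ)
    (hΨ : ∀ s : ℝ, Ψ s = σw ^ 2 + (1 / δ) *
      ∫ x, (∫ z, (softThr (x + Real.sqrt s * z) (β * Real.sqrt s) - x) ^ 2 * gaussPDF z) ∂G) :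
    ∀ s₁ s₂ α : ℝ, 0 ≤ s₁ → 0 ≤ s₂ → 0 ≤ α → α ≤ 1 →
      α * Ψ s₁ + (1 - α) * Ψ s₂ ≤ Ψ (α * s₁ + (1 - α) * s₂) :=
  Psi_concave_general G δ σw β hδ hβ Ψ hΨ
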